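/- Let n ≥ 3, let p be a discrete distribution on a countable set, let X₁,…,Xₙ be i.i.d. samples from p, and let p̂ₙ be the empirical distribution. Then Var(H(p̂ₙ)) ≤ 4·(ln n)²/n. -/
import Mathlib


open Finset

/-- The empirical entropy of a sample sequence `x` over a countable alphabet:
`H(p̂_x) = ∑_a negMulLog (N_a / n)`, summed over the symbols appearing in `x`,
where `N_a = |{j : x j = a}|` (recall `Real.negMulLog t = -t * ln t`). -/
noncomputable def empEntropyC {X : Type*} [DecidableEq X] {n : ℕ} (x : Fin n → X) : ℝ :=
  ∑ a ∈ Finset.univ.image x,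
    Real.negMulLog (((Finset.univ.filter (fun j => x j = a)).card : ℝ) / n)

/-- Expectation of `f` under `n` i.i.d. samples from a discrete distribution `p`. -/
noncomputable def iidExpC {X : Type*} (p : X → ℝ) (n : ℕ) (f : (Fin n → X) → ℝ) : ℝ :=
  ∑' x : Fin n → X, (∏ j, p (x j)) * f x


section Generic
variable {X : Type*} {p : X → ℝ}

lemma sump (hnn : ∀ x, 0 ≤ p x) (hsum : ∑' x, p x = 1) : Summable p := by
  by_contra h
  rw [tsum_eq_zero_of_not_summable h] at hsum
  norm_num at hsum

lemma wt_cons {m : ℕ} (a : X) (y : Fin m → X) :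
    (∏ j : Fin (m+1), p ((Fin.cons a y : Fin (m+1) → X) j)) = p a * ∏ j, p (y j) := by
  rw [Fin.prod_univ_succ]
  simp

lemma wt_summable (hnn : ∀ x, 0 ≤ p x) (hsum : ∑' x, p x = 1) (m : ℕ) :
    Summable (fun x : Fin m → X => ∏ j, p (x j)) := by
  induction m with
  | zero => exact .of_finite
  | succ m ih =>
    apply (Fin.consEquiv (fun _ : Fin (m+1) => X)).summable_iff.1
    have h2 : Summable (fun z : X × (Fin m → X) => p z.1 * ∏ j, p (z.2 j)) :=
      Summable.mul_of_nonneg (f := p) (g := fun y : Fin m → X => ∏ j, p (y j))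
        (sump hnn hsum) ih (fun x => hnn x) (fun y => Finset.prod_nonneg fun j _ => hnn _)
    refine h2.congr fun z => ?_
    show p z.1 * ∏ j, p (z.2 j) = ∏ j : Fin (m+1), p ((Fin.consEquiv (fun _ : Fin (m+1) => X)) z j)
    rw [show ((Fin.consEquiv (fun _ : Fin (m+1) => X)) z : Fin (m+1) → X) = Fin.cons z.1 z.2 from rfl,
      wt_cons]

lemma wt_nonneg (hnn : ∀ x, 0 ≤ p x) {m : ℕ} (x : Fin m → X) :
    0 ≤ ∏ j, p (x j) := Finset.prod_nonneg fun j _ => hnn _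

lemma wt_tsum (hnn : ∀ x, 0 ≤ p x) (hsum : ∑' x, p x = 1) (m : ℕ) :
    ∑' x : Fin m → X, ∏ j, p (x j) = 1 := by
  induction m with
  | zero =>
    rw [tsum_eq_single (fun i => i.elim0) (fun b hb => absurd (funext fun i => i.elim0) hb)]
    simp
  | succ m ih =>
    rw [← (Fin.consEquiv (fun _ : Fin (m+1) => X)).tsum_eq]
    have hsummand : ∀ z : X × (Fin m → X),
        (∏ j, p ((Fin.consEquiv (fun _ : Fin (m+1) => X)) z j)) = p z.1 * ∏ j, p (z.2 j) := by
      intro z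
      rw [show ((Fin.consEquiv (fun _ : Fin (m+1) => X)) z : Fin (m+1) → X) = Fin.cons z.1 z.2 from rfl,
        wt_cons]
    calc ∑' z : X × (Fin m → X), ∏ j, p ((Fin.consEquiv (fun _ : Fin (m+1) => X)) z j)
        = ∑' z : X × (Fin m → X), p z.1 * ∏ j, p (z.2 j) := tsum_congr hsummand
      _ = ∑' a, ∑' y : Fin m → X, p a * ∏ j, p (y j) := by
          refine Summable.tsum_prod' ?_ ?_
          · exact Summable.mul_of_nonneg (f := p) (g := fun y : Fin m → X => ∏ j, p (y j))
              (sump hnn hsum) (wt_summable hnn hsum m) (fun x => hnn x)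
              (fun y => wt_nonneg hnn y)
          · intro a; exact (wt_summable hnn hsum m).mul_left (p a)
      _ = ∑' a, p a * ∑' y : Fin m → X, ∏ j, p (y j) := by
          refine tsum_congr fun a => ?_; exact tsum_mul_left
      _ = 1 := by rw [ih]; simpa using hsum

lemma exp_summable (hnn : ∀ x, 0 ≤ p x) (hsum : ∑' x, p x = 1) {m : ℕ}
    {f : (Fin m → X) → ℝ} {B : ℝ} (hB : ∀ x, |f x| ≤ B) :
    Summable (fun x : Fin m → X => (∏ j, p (x j)) * f x) := by
  apply Summable.of_abs
  apply Summable.of_nonneg_of_le (fun x => abs_nonneg _)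
    (f := fun x : Fin m → X => (∏ j, p (x j)) * B)
  · intro x
    rw [abs_mul, abs_of_nonneg (wt_nonneg hnn x)]
    exact mul_le_mul_of_nonneg_left (hB x) (wt_nonneg hnn x)
  · exact (wt_summable hnn hsum m).mul_right B

lemma exp_abs_summable (hnn : ∀ x, 0 ≤ p x) (hsum : ∑' x, p x = 1) {m : ℕ}
    {f : (Fin m → X) → ℝ} {B : ℝ} (hB : ∀ x, |f x| ≤ B) :
    Summable (fun x : Fin m → X => |(∏ j, p (x j)) * f x|) := by
  apply Summable.of_nonneg_of_le (fun x => abs_nonneg _)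
    (f := fun x : Fin m → X => (∏ j, p (x j)) * B)
  · intro x
    rw [abs_mul, abs_of_nonneg (wt_nonneg hnn x)]
    exact mul_le_mul_of_nonneg_left (hB x) (wt_nonneg hnn x)
  · exact (wt_summable hnn hsum m).mul_right B

lemma exp_abs_le (hnn : ∀ x, 0 ≤ p x) (hsum : ∑' x, p x = 1) {m : ℕ}
    {f : (Fin m → X) → ℝ} {B : ℝ} (hB : ∀ x, |f x| ≤ B) :
    |iidExpC p m f| ≤ B := by
  have hsm : Summable (fun x : Fin m → X => ‖(∏ j, p (x j)) * f x‖) := by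
    simp only [Real.norm_eq_abs]
    exact exp_abs_summable hnn hsum hB
  have h1 := norm_tsum_le_tsum_norm (f := fun x : Fin m → X => (∏ j, p (x j)) * f x) hsm
  simp only [Real.norm_eq_abs] at h1
  refine h1.trans ?_
  have h2 : ∑' x : Fin m → X, |(∏ j, p (x j)) * f x| ≤ ∑' x : Fin m → X, (∏ j, p (x j)) * B := by
    refine Summable.tsum_le_tsum (fun x => ?_) (exp_abs_summable hnn hsum hB)
      ((wt_summable hnn hsum m).mul_right B)
    rw [abs_mul, abs_of_nonneg (wt_nonneg hnn x)]
    exact mul_le_mul_of_nonneg_left (hB x) (wt_nonneg hnn x)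
  refine h2.trans ?_
  rw [tsum_mul_right, wt_tsum hnn hsum m, one_mul]

lemma exp_nonneg (hnn : ∀ x, 0 ≤ p x) {m : ℕ} {f : (Fin m → X) → ℝ}
    (hf : ∀ x, 0 ≤ f x) : 0 ≤ iidExpC p m f :=
  tsum_nonneg fun x => mul_nonneg (wt_nonneg hnn x) (hf x)

lemma exp_succ (hnn : ∀ x, 0 ≤ p x) (hsum : ∑' x, p x = 1) {m : ℕ}
    {f : (Fin (m+1) → X) → ℝ} {B : ℝ} (hB : ∀ x, |f x| ≤ B) :
    iidExpC p (m+1) f = ∑' a, p a * iidExpC p m (fun y => f (Fin.cons a y)) := by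
  unfold iidExpC
  rw [← (Fin.consEquiv (fun _ : Fin (m+1) => X)).tsum_eq]
  have key : ∀ z : X × (Fin m → X),
      (∏ j, p ((Fin.consEquiv (fun _ : Fin (m+1) => X)) z j)) *
        f ((Fin.consEquiv (fun _ : Fin (m+1) => X)) z)
      = p z.1 * ((∏ j, p (z.2 j)) * f (Fin.cons z.1 z.2)) := by
    intro z
    rw [show ((Fin.consEquiv (fun _ : Fin (m+1) => X)) z : Fin (m+1) → X) = Fin.cons z.1 z.2
      from rfl, wt_cons, mul_assoc]
  rw [tsum_congr key]
  have hsm : Summable (fun z : X × (Fin m → X) =>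
      p z.1 * ((∏ j, p (z.2 j)) * f (Fin.cons z.1 z.2))) := by
    have h0 := exp_summable hnn hsum (m := m+1) hB
    have h1 := ((Fin.consEquiv (fun _ : Fin (m+1) => X)).summable_iff
      (f := fun x : Fin (m+1) → X => (∏ j, p (x j)) * f x)).2 h0
    exact h1.congr fun z => key z
  have hfib : ∀ a : X, Summable (fun y : Fin m → X =>
      p a * ((∏ j, p (y j)) * f (Fin.cons a y))) := fun a =>
    (exp_summable hnn hsum (m := m) (f := fun y => f (Fin.cons a y)) (fun y => hB _)).mul_left (p a)
  calc ∑' z : X × (Fin m → X), p z.1 * ((∏ j, p (z.2 j)) * f (Fin.cons z.1 z.2))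
      = ∑' a, ∑' y : Fin m → X, p a * ((∏ j, p (y j)) * f (Fin.cons a y)) :=
        Summable.tsum_prod' hsm hfib
    _ = ∑' a, p a * ∑' y : Fin m → X, (∏ j, p (y j)) * f (Fin.cons a y) :=
        tsum_congr fun a => tsum_mul_left
    _ = ∑' a, p a * iidExpC p m (fun y => f (Fin.cons a y)) := rfl

lemma abs_sq_le {u v B : ℝ} (hu : |u| ≤ B) (hv : |v| ≤ B) : |(u - v)^2| ≤ (2*B)^2 := by
  have h1 : |u - v| ≤ 2*B := by
    have := abs_sub u v
    have h2 : |u - v| ≤ |u| + |v| := abs_sub _ _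
    linarith
  calc |(u - v)^2| = |u - v|^2 := abs_pow (u - v) 2
    _ ≤ (2*B)^2 := by
        have := pow_le_pow_left₀ (abs_nonneg (u - v)) h1 2
        simpa using this

lemma var_le (hnn : ∀ x, 0 ≤ p x) (hsum : ∑' x, p x = 1) (B c : ℝ) (hc : 0 ≤ c) :
    ∀ (m : ℕ) (f : (Fin m → X) → ℝ), (∀ x, |f x| ≤ B) →
    (∀ (x x' : Fin m → X) (i : Fin m), (∀ j, j ≠ i → x j = x' j) → |f x - f x'| ≤ c) →
    iidExpC p m (fun x => (f x - iidExpC p m f)^2) ≤ m * c^2 := by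
  intro m
  induction m with
  | zero =>
    intro f hB hdiff
    have hu : ∀ x : Fin 0 → X, x = (fun i => i.elim0) := fun x => funext fun i => i.elim0
    have hval : ∀ g : (Fin 0 → X) → ℝ, iidExpC p 0 g = g (fun i => i.elim0) := by
      intro g
      unfold iidExpC
      rw [tsum_eq_single (fun i : Fin 0 => i.elim0) (fun b hb => absurd (hu b) hb)]
      simp
    rw [hval, hval]
    simp
  | succ m ih =>
    intro f hB hdiff
    have hX : Nonempty X := by
      by_contra h
      rw [not_nonempty_iff] at h
      rw [tsum_empty] at hsum
      norm_num at hsum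
    have hB0 : 0 ≤ B := le_trans (abs_nonneg _) (hB (fun _ => Classical.arbitrary X))
    set E := iidExpC p (m+1) f with hEdef
    have hEb : |E| ≤ B := exp_abs_le hnn hsum hB
    set h : X → ℝ := fun a => iidExpC p m (fun y => f (Fin.cons a y)) with hhdef
    have hhb : ∀ a, |h a| ≤ B := fun a => exp_abs_le hnn hsum (fun y => hB _)
    have hEeq : E = ∑' a, p a * h a := exp_succ hnn hsum hB
    -- agreement of cons at nonzero coordinates
    have hcons0 : ∀ (a a' : X) (y : Fin m → X) (j : Fin (m+1)), j ≠ 0 →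
        (Fin.cons a y : Fin (m+1) → X) j = (Fin.cons a' y : Fin (m+1) → X) j := by
      intro a a' y j hj
      induction j using Fin.cases with
      | zero => exact absurd rfl hj
      | succ k => simp
    have hdh : ∀ a a', |h a - h a'| ≤ c := by
      intro a a'
      have h1 : Summable (fun y : Fin m → X => (∏ j, p (y j)) * f (Fin.cons a y)) :=
        exp_summable hnn hsum (fun y => hB _)
      have h2 : Summable (fun y : Fin m → X => (∏ j, p (y j)) * f (Fin.cons a' y)) :=
        exp_summable hnn hsum (fun y => hB _)
      have heq : h a - h a' =
          iidExpC p m (fun y => f (Fin.cons a y) - f (Fin.cons a' y)) := by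
        show iidExpC p m _ - iidExpC p m _ = _
        unfold iidExpC
        rw [← Summable.tsum_sub h1 h2]
        exact tsum_congr fun y => (mul_sub _ _ _).symm
      rw [heq]
      exact exp_abs_le hnn hsum (fun y => hdiff _ _ 0 (hcons0 a a' y))
    have hhaE : ∀ a, |h a - E| ≤ c := by
      intro a
      have h1 : Summable (fun a' => p a' * h a) := (sump hnn hsum).mul_right (h a)
      have h2 : Summable (fun a' => p a' * h a') := by
        apply Summable.of_abs
        apply Summable.of_nonneg_of_le (fun a' => abs_nonneg _) (f := fun a' => p a' * B)
        · intro a'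
          rw [abs_mul, abs_of_nonneg (hnn a')]
          exact mul_le_mul_of_nonneg_left (hhb a') (hnn a')
        · exact (sump hnn hsum).mul_right B
      have heq : h a - E = ∑' a', p a' * (h a - h a') := by
        rw [hEeq]
        calc h a - ∑' a', p a' * h a'
            = (∑' a', p a' * h a) - ∑' a', p a' * h a' := by
              rw [tsum_mul_right, hsum, one_mul]
          _ = ∑' a', (p a' * h a - p a' * h a') := (Summable.tsum_sub h1 h2).symm
          _ = ∑' a', p a' * (h a - h a') := tsum_congr fun a' => (mul_sub _ _ _).symm
      rw [heq]
      have hsn : Summable (fun a' => ‖p a' * (h a - h a')‖) := by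
        simp only [Real.norm_eq_abs]
        apply Summable.of_nonneg_of_le (fun a' => abs_nonneg _) (f := fun a' => p a' * c)
        · intro a'
          rw [abs_mul, abs_of_nonneg (hnn a')]
          exact mul_le_mul_of_nonneg_left (hdh a a') (hnn a')
        · exact (sump hnn hsum).mul_right c
      have hb1 := norm_tsum_le_tsum_norm hsn
      simp only [Real.norm_eq_abs] at hb1
      refine hb1.trans ?_
      have hb2 : ∑' a', |p a' * (h a - h a')| ≤ ∑' a', p a' * c := by
        refine Summable.tsum_le_tsum (fun a' => ?_) (by simpa only [Real.norm_eq_abs] using hsn)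
          ((sump hnn hsum).mul_right c)
        rw [abs_mul, abs_of_nonneg (hnn a')]
        exact mul_le_mul_of_nonneg_left (hdh a a') (hnn a')
      refine hb2.trans ?_
      rw [tsum_mul_right, hsum, one_mul]
    -- decomposition of the conditional second moment
    have hdecomp : ∀ a, iidExpC p m (fun y => (f (Fin.cons a y) - E)^2) =
        iidExpC p m (fun y => (f (Fin.cons a y) - h a)^2) + (h a - E)^2 := by
      intro a
      have s1 : Summable (fun y : Fin m → X => (∏ j, p (y j)) * (f (Fin.cons a y) - h a)^2) :=
        exp_summable hnn hsum (fun y => abs_sq_le (hB _) (hhb a))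
      have s2 : Summable (fun y : Fin m → X => (∏ j, p (y j)) * (f (Fin.cons a y) - h a)) := by
        refine exp_summable hnn hsum (B := 2*B) (fun y => ?_)
        have := abs_add_le (f (Fin.cons a y)) (-(h a))
        rw [abs_neg] at this
        have h3 := hB (Fin.cons a y)
        have h4 := hhb a
        calc |f (Fin.cons a y) - h a| = |f (Fin.cons a y) + -(h a)| := by ring_nf
          _ ≤ _ := this
          _ ≤ 2*B := by linarith
      have s2' : Summable (fun y : Fin m → X =>
          (2*(h a - E)) * ((∏ j, p (y j)) * (f (Fin.cons a y) - h a))) :=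
        s2.mul_left _
      have s3 : Summable (fun y : Fin m → X => (h a - E)^2 * ∏ j, p (y j)) :=
        (wt_summable hnn hsum m).mul_left _
      have hptw : ∀ y : Fin m → X, (∏ j, p (y j)) * (f (Fin.cons a y) - E)^2 =
          (∏ j, p (y j)) * (f (Fin.cons a y) - h a)^2 +
          ((2*(h a - E)) * ((∏ j, p (y j)) * (f (Fin.cons a y) - h a)) +
            (h a - E)^2 * ∏ j, p (y j)) := by
        intro y; ring
      have hS2 : ∑' y : Fin m → X, (∏ j, p (y j)) * (f (Fin.cons a y) - h a) = 0 := by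
        have t1 : Summable (fun y : Fin m → X => (∏ j, p (y j)) * f (Fin.cons a y)) :=
          exp_summable hnn hsum (fun y => hB _)
        have t2 : Summable (fun y : Fin m → X => (∏ j, p (y j)) * h a) :=
          (wt_summable hnn hsum m).mul_right _
        calc ∑' y : Fin m → X, (∏ j, p (y j)) * (f (Fin.cons a y) - h a)
            = ∑' y : Fin m → X, ((∏ j, p (y j)) * f (Fin.cons a y) - (∏ j, p (y j)) * h a) :=
              tsum_congr fun y => mul_sub _ _ _
          _ = (∑' y : Fin m → X, (∏ j, p (y j)) * f (Fin.cons a y)) -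
              ∑' y : Fin m → X, (∏ j, p (y j)) * h a := Summable.tsum_sub t1 t2
          _ = h a - h a := by rw [tsum_mul_right, wt_tsum hnn hsum m, one_mul]; rfl
          _ = 0 := sub_self _
      show ∑' y : Fin m → X, (∏ j, p (y j)) * (f (Fin.cons a y) - E)^2 = _
      rw [tsum_congr hptw, Summable.tsum_add s1 (s2'.add s3), Summable.tsum_add s2' s3, tsum_mul_left, hS2,
        mul_zero, zero_add, tsum_mul_left, wt_tsum hnn hsum m, mul_one]
      rfl
    -- induction hypothesis applied to each section
    have hih : ∀ a, iidExpC p m (fun y => (f (Fin.cons a y) - h a)^2) ≤ m * c^2 := by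
      intro a
      refine ih (fun y => f (Fin.cons a y)) (fun y => hB _) ?_
      intro y y' i hyy'
      refine hdiff (Fin.cons a y) (Fin.cons a y') i.succ ?_
      intro j hj
      induction j using Fin.cases with
      | zero => simp
      | succ k =>
        simp only [Fin.cons_succ]
        exact hyy' k (fun hk => hj (by rw [hk]))
    have hVle : ∀ a, iidExpC p m (fun y => (f (Fin.cons a y) - E)^2) ≤ (m+1 : ℝ) * c^2 := by
      intro a
      rw [hdecomp a]
      have hsq : (h a - E)^2 ≤ c^2 := by
        rw [← sq_abs]
        exact pow_le_pow_left₀ (abs_nonneg _) (hhaE a) 2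
      have := hih a
      nlinarith [this, hsq]
    have hVnn : ∀ a, 0 ≤ iidExpC p m (fun y => (f (Fin.cons a y) - E)^2) :=
      fun a => exp_nonneg hnn (fun y => sq_nonneg _)
    -- put it together
    have hsqB : ∀ x : Fin (m+1) → X, |(f x - E)^2| ≤ (2*B)^2 :=
      fun x => abs_sq_le (hB x) hEb
    have hmain : iidExpC p (m+1) (fun x => (f x - E)^2) =
        ∑' a, p a * iidExpC p m (fun y => (f (Fin.cons a y) - E)^2) :=
      exp_succ hnn hsum hsqB
    rw [hEdef] at hmain
    rw [hmain]
    have hfin : ∑' a, p a * iidExpC p m (fun y => (f (Fin.cons a y) - E)^2) ≤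
        ∑' a, p a * ((m+1 : ℝ) * c^2) := by
      refine Summable.tsum_le_tsum (fun a => mul_le_mul_of_nonneg_left (hVle a) (hnn a)) ?_
        ((sump hnn hsum).mul_right _)
      apply Summable.of_nonneg_of_le (fun a => mul_nonneg (hnn a) (hVnn a))
        (fun a => mul_le_mul_of_nonneg_left (hVle a) (hnn a))
        ((sump hnn hsum).mul_right _)
    refine hfin.trans ?_
    rw [tsum_mul_right, hsum, one_mul]
    push_cast
    exact le_refl _



end Generic

section Entropy
open Real

lemma negMulLog_le_one {t : ℝ} (h0 : 0 ≤ t) (h1 : t ≤ 1) : Real.negMulLog t ≤ 1 := by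
  rcases eq_or_lt_of_le h0 with h | h
  · rw [← h]; simp
  · have hlog : Real.log t⁻¹ ≤ t⁻¹ - 1 := Real.log_le_sub_one_of_pos (by positivity)
    have : Real.negMulLog t = t * Real.log t⁻¹ := by
      rw [Real.log_inv, Real.negMulLog]; ring
    rw [this]
    calc t * Real.log t⁻¹ ≤ t * (t⁻¹ - 1) := mul_le_mul_of_nonneg_left hlog h0
      _ = 1 - t := by field_simp
      _ ≤ 1 := by linarith

lemma one_le_log {n : ℕ} (hn : 3 ≤ n) : 1 ≤ Real.log n := by
  have h3 : Real.exp 1 ≤ 3 := le_of_lt (lt_trans Real.exp_one_lt_d9 (by norm_num))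
  have h1 : (1:ℝ) ≤ Real.log 3 := (Real.le_log_iff_exp_le (by norm_num)).2 h3
  refine h1.trans (Real.log_le_log (by norm_num) ?_)
  exact_mod_cast hn

lemma step_bound {n : ℕ} (hn : 3 ≤ n) (N : ℕ) (h1 : N + 1 ≤ n) :
    |Real.negMulLog (((N:ℝ)+1)/n) - Real.negMulLog ((N:ℝ)/n)| ≤ Real.log n / n := by
  have hn0 : (0:ℝ) < n := by positivity
  have hlog1 : 1 ≤ Real.log n := one_le_log hn
  rcases Nat.eq_zero_or_pos N with hN | hN
  · subst hN
    simp only [Nat.cast_zero, zero_add, zero_div, Real.negMulLog_zero, sub_zero]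
    have : Real.negMulLog (1/(n:ℝ)) = Real.log n / n := by
      rw [Real.negMulLog, one_div, Real.log_inv]
      field_simp
    rw [this, abs_of_nonneg (by positivity)]
  · -- MVT on [N/n, (N+1)/n] ⊆ [1/n, 1]
    set a : ℝ := (N:ℝ)/n with ha
    set b : ℝ := ((N:ℝ)+1)/n with hb
    have hapos : 0 < a := div_pos (by exact_mod_cast hN) hn0
    have hab : a < b := by rw [ha, hb]; gcongr; linarith
    have hb1 : b ≤ 1 := by
      rw [hb, div_le_one hn0]
      exact_mod_cast h1
    have hcont : ContinuousOn Real.negMulLog (Set.Icc a b) :=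
      Real.continuous_negMulLog.continuousOn
    have hdiffon : DifferentiableOn ℝ Real.negMulLog (Set.Ioo a b) := by
      intro t ht
      apply DifferentiableAt.differentiableWithinAt
      rw [Real.differentiableAt_negMulLog_iff]
      exact ne_of_gt (lt_trans hapos ht.1)
    obtain ⟨ξ, hξ, hder⟩ := exists_deriv_eq_slope Real.negMulLog hab hcont hdiffon
    have hξpos : 0 < ξ := lt_trans hapos hξ.1
    have hξ1 : ξ ≤ 1 := le_of_lt (lt_of_lt_of_le hξ.2 hb1)
    have hξlow : 1/(n:ℝ) ≤ ξ := by
      refine le_of_lt (lt_of_le_of_lt ?_ hξ.1)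
      rw [ha]
      gcongr
      exact_mod_cast hN
    rw [Real.deriv_negMulLog (ne_of_gt hξpos)] at hder
    have hba : b - a = 1/n := by rw [ha, hb]; ring
    have hfb : Real.negMulLog b - Real.negMulLog a = (-Real.log ξ - 1) * (1/n) := by
      have hbane : b - a ≠ 0 := ne_of_gt (by linarith)
      rw [← hba, hder, div_mul_cancel₀ _ hbane]
    have hlogξ1 : Real.log ξ ≤ 0 := Real.log_nonpos (le_of_lt hξpos) hξ1
    have hlogξ2 : -Real.log n ≤ Real.log ξ := by
      have := Real.log_le_log (by positivity : (0:ℝ) < 1/n) hξlow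
      rwa [one_div, Real.log_inv] at this
    have habs : |(-Real.log ξ - 1)| ≤ Real.log n := by
      rw [abs_le]
      constructor <;> linarith
    calc |Real.negMulLog b - Real.negMulLog a|
        = |(-Real.log ξ - 1)| * (1/n) := by
          rw [hfb, abs_mul, abs_of_pos (by positivity : (0:ℝ) < 1/(n:ℝ))]
      _ ≤ Real.log n * (1/n) := mul_le_mul_of_nonneg_right habs (by positivity)
      _ = Real.log n / n := by ring

variable {X : Type*} [DecidableEq X]

lemma cnt_card_le {n : ℕ} (x : Fin n → X) (a : X) :
    (Finset.univ.filter (fun j => x j = a)).card ≤ n := by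
  have := Finset.card_filter_le (Finset.univ : Finset (Fin n)) (fun j => x j = a)
  simpa using this

lemma emp_eq_sum {n : ℕ} (x : Fin n → X) {S : Finset X} (hS : Finset.univ.image x ⊆ S) :
    empEntropyC x =
      ∑ a ∈ S, Real.negMulLog (((Finset.univ.filter (fun j => x j = a)).card : ℝ) / n) := by
  unfold empEntropyC
  refine Finset.sum_subset hS ?_
  intro a _ ha
  have hemp : (Finset.univ.filter (fun j => x j = a)) = ∅ := by
    rw [Finset.filter_eq_empty_iff]
    intro j _
    exact fun hj => ha (Finset.mem_image.2 ⟨j, Finset.mem_univ j, hj⟩)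
  rw [hemp]
  simp

lemma emp_abs_le {n : ℕ} (x : Fin n → X) : |empEntropyC x| ≤ (n : ℝ) := by
  have hterm : ∀ a ∈ Finset.univ.image x,
      0 ≤ Real.negMulLog (((Finset.univ.filter (fun j => x j = a)).card : ℝ) / n) ∧
      Real.negMulLog (((Finset.univ.filter (fun j => x j = a)).card : ℝ) / n) ≤ 1 := by
    intro a ha
    obtain ⟨j, _, _⟩ := Finset.mem_image.1 ha
    have hn0 : (0:ℝ) < n := by
      have : 0 < n := Fin.pos j
      exact_mod_cast this
    have h0 : (0:ℝ) ≤ ((Finset.univ.filter (fun j => x j = a)).card : ℝ) / n := by positivity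
    have h1 : ((Finset.univ.filter (fun j => x j = a)).card : ℝ) / n ≤ 1 := by
      rw [div_le_one hn0]
      exact_mod_cast cnt_card_le x a
    exact ⟨Real.negMulLog_nonneg h0 h1, negMulLog_le_one h0 h1⟩
  unfold empEntropyC
  rw [abs_of_nonneg (Finset.sum_nonneg fun a ha => (hterm a ha).1)]
  calc ∑ a ∈ Finset.univ.image x,
        Real.negMulLog (((Finset.univ.filter (fun j => x j = a)).card : ℝ) / n)
      ≤ ∑ a ∈ Finset.univ.image x, 1 := Finset.sum_le_sum fun a ha => (hterm a ha).2
    _ = ((Finset.univ.image x).card : ℝ) := by simp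
    _ ≤ (n : ℝ) := by
        have h2 : (Finset.univ.image x).card ≤ n := by
          have := Finset.card_image_le (s := (Finset.univ : Finset (Fin n))) (f := x)
          simpa using this
        exact_mod_cast h2

lemma emp_bdd {n : ℕ} (hn : 3 ≤ n) (x x' : Fin n → X) (i : Fin n)
    (hagree : ∀ j, j ≠ i → x j = x' j) :
    |empEntropyC x - empEntropyC x'| ≤ 2 * Real.log n / n := by
  have hn0 : (0:ℝ) < n := by
    have : 0 < n := by omega
    exact_mod_cast this
  have hlog0 : 0 ≤ Real.log n := Real.log_nonneg (by exact_mod_cast (by omega : 1 ≤ n))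
  have hrhs : 0 ≤ 2 * Real.log n / n := by positivity
  by_cases hxi : x i = x' i
  · have : x = x' := funext fun j => by
      by_cases hj : j = i
      · rw [hj]; exact hxi
      · exact hagree j hj
    rw [this, sub_self, abs_zero]; exact hrhs
  · set c1 : X → ℕ := fun a => (Finset.univ.filter (fun j => x j = a)).card with hc1
    set c2 : X → ℕ := fun a => (Finset.univ.filter (fun j => x' j = a)).card with hc2
    set S := Finset.univ.image x ∪ Finset.univ.image x' with hSdef
    have hhx : empEntropyC x = ∑ a ∈ S, Real.negMulLog ((c1 a : ℝ) / n) :=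
      emp_eq_sum x Finset.subset_union_left
    have hhx' : empEntropyC x' = ∑ a ∈ S, Real.negMulLog ((c2 a : ℝ) / n) :=
      emp_eq_sum x' Finset.subset_union_right
    have claimeq : ∀ a, a ≠ x i → a ≠ x' i → c1 a = c2 a := by
      intro a ha1 ha2
      show (Finset.univ.filter (fun j => x j = a)).card =
        (Finset.univ.filter (fun j => x' j = a)).card
      congr 1
      ext j
      simp only [Finset.mem_filter, Finset.mem_univ, true_and]
      by_cases hj : j = i
      · subst hj
        constructor
        · intro h; exact absurd h.symm ha1
        · intro h; exact absurd h.symm ha2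
      · rw [hagree j hj]
    have claim2 : c1 (x i) = c2 (x i) + 1 := by
      have hins : (Finset.univ.filter (fun j => x j = x i)) =
          insert i (Finset.univ.filter (fun j => x' j = x i)) := by
        ext j
        simp only [Finset.mem_filter, Finset.mem_univ, true_and, Finset.mem_insert]
        by_cases hj : j = i
        · subst hj; simp
        · rw [hagree j hj]; simp [hj]
      show (Finset.univ.filter (fun j => x j = x i)).card =
        (Finset.univ.filter (fun j => x' j = x i)).card + 1
      rw [hins, Finset.card_insert_of_notMem]
      simp only [Finset.mem_filter, Finset.mem_univ, true_and]
      exact fun h => hxi h.symm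
    have claim3 : c2 (x' i) = c1 (x' i) + 1 := by
      have hins : (Finset.univ.filter (fun j => x' j = x' i)) =
          insert i (Finset.univ.filter (fun j => x j = x' i)) := by
        ext j
        simp only [Finset.mem_filter, Finset.mem_univ, true_and, Finset.mem_insert]
        by_cases hj : j = i
        · subst hj; simp
        · rw [hagree j hj]; simp [hj]
      show (Finset.univ.filter (fun j => x' j = x' i)).card =
        (Finset.univ.filter (fun j => x j = x' i)).card + 1
      rw [hins, Finset.card_insert_of_notMem]
      simp only [Finset.mem_filter, Finset.mem_univ, true_and]
      exact hxi
    have hpair : ({x i, x' i} : Finset X) ⊆ S := by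
      intro a ha
      rcases Finset.mem_insert.1 ha with h | h
      · subst h
        exact Finset.mem_union_left _ (Finset.mem_image.2 ⟨i, Finset.mem_univ i, rfl⟩)
      · rw [Finset.mem_singleton] at h
        subst h
        exact Finset.mem_union_right _ (Finset.mem_image.2 ⟨i, Finset.mem_univ i, rfl⟩)
    rw [hhx, hhx', ← Finset.sum_sub_distrib]
    refine le_trans (Finset.abs_sum_le_sum_abs _ _) ?_
    have hrestrict : ∑ a ∈ S, |Real.negMulLog ((c1 a : ℝ)/n) - Real.negMulLog ((c2 a : ℝ)/n)| =
        ∑ a ∈ ({x i, x' i} : Finset X),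
          |Real.negMulLog ((c1 a : ℝ)/n) - Real.negMulLog ((c2 a : ℝ)/n)| := by
      refine (Finset.sum_subset hpair ?_).symm
      intro a _ ha
      simp only [Finset.mem_insert, Finset.mem_singleton, not_or] at ha
      rw [claimeq a ha.1 ha.2, sub_self, abs_zero]
    rw [hrestrict, Finset.sum_pair hxi]
    have hb1 : |Real.negMulLog ((c1 (x i) : ℝ)/n) - Real.negMulLog ((c2 (x i) : ℝ)/n)| ≤
        Real.log n / n := by
      have hle : c2 (x i) + 1 ≤ n := by
        have h1 : c1 (x i) ≤ n := cnt_card_le x (x i)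
        omega
      have hcast : (c1 (x i) : ℝ) = (c2 (x i) : ℝ) + 1 := by exact_mod_cast claim2
      rw [hcast]
      exact step_bound hn (c2 (x i)) hle
    have hb2 : |Real.negMulLog ((c1 (x' i) : ℝ)/n) - Real.negMulLog ((c2 (x' i) : ℝ)/n)| ≤
        Real.log n / n := by
      have hle : c1 (x' i) + 1 ≤ n := by
        have h1 : c2 (x' i) ≤ n := cnt_card_le x' (x' i)
        omega
      have hcast : (c2 (x' i) : ℝ) = (c1 (x' i) : ℝ) + 1 := by exact_mod_cast claim3
      rw [abs_sub_comm, hcast]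
      exact step_bound hn (c1 (x' i)) hle
    calc |Real.negMulLog ((c1 (x i) : ℝ)/n) - Real.negMulLog ((c2 (x i) : ℝ)/n)| +
          |Real.negMulLog ((c1 (x' i) : ℝ)/n) - Real.negMulLog ((c2 (x' i) : ℝ)/n)|
        ≤ Real.log n / n + Real.log n / n := add_le_add hb1 hb2
      _ = 2 * Real.log n / n := by ring

end Entropy


/-- for `n ≥ 3`, a discrete distribution `p` on a countable set, and `n`
i.i.d. samples with empirical distribution `p̂ₙ`, the variance of the empirical entropy
satisfies `Var (H(p̂ₙ)) ≤ 4 (ln n)² / n`. -/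
theorem stmt_16 {X : Type*} [Countable X] [DecidableEq X] (n : ℕ) (hn : 3 ≤ n)
    (p : X → ℝ) (hnn : ∀ x, 0 ≤ p x) (hsum : ∑' x, p x = 1) :
    iidExpC p n (fun x => (empEntropyC x - iidExpC p n (fun y => empEntropyC y)) ^ 2) ≤
      4 * (Real.log n) ^ 2 / n := by
  have hn0 : (0:ℝ) < n := by
    have : 0 < n := by omega
    exact_mod_cast this
  have hlog0 : 0 ≤ Real.log n := Real.log_nonneg (by exact_mod_cast (by omega : 1 ≤ n))
  have hc : 0 ≤ 2 * Real.log n / n := by positivity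
  have h := var_le hnn hsum (n : ℝ) (2 * Real.log n / n) hc n (fun x => empEntropyC x)
    (fun x => emp_abs_le x)
    (fun x x' i hag => emp_bdd hn x x' i hag)
  refine le_trans h ?_
  rw [show (n:ℝ) * (2 * Real.log n / n)^2 = 4 * (Real.log n)^2 / n by
    field_simp; ring]
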